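/- If X is a Hausdorff space, then d(X) ≤ πχ(X)^(c(X)·dψ_c(X)). -/

import Mathlib

open Cardinal Set TopologicalSpace

universe u

/-- The density of a space: the least cardinality of a dense subset. -/
noncomputable def dens (X : Type u) [TopologicalSpace X] : Cardinal.{u} :=
  sInf {c : Cardinal.{u} | ∃ D : Set X, Dense D ∧ #D = c}

/-- A local π-base at a point: a family of nonempty open sets such that every
open set containing the point contains a member of the family. -/
def IsLocalPiBase (X : Type u) [TopologicalSpace X] (x : X) (𝒱 : Set (Set X)) : Prop :=
  (∀ V ∈ 𝒱, IsOpen V ∧ V.Nonempty) ∧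
    ∀ U : Set X, IsOpen U → x ∈ U → ∃ V ∈ 𝒱, V ⊆ U

/-- The π-character at a point: the least infinite cardinality of a local π-base. -/
noncomputable def piCharPoint (X : Type u) [TopologicalSpace X] (x : X) : Cardinal.{u} :=
  sInf {κ : Cardinal.{u} | ℵ₀ ≤ κ ∧ ∃ 𝒱 : Set (Set X), IsLocalPiBase X x 𝒱 ∧ #𝒱 ≤ κ}

/-- The π-character of a space. -/
noncomputable def piChar (X : Type u) [TopologicalSpace X] : Cardinal.{u} :=
  ⨆ x : X, piCharPoint X x

/-- A π-base for a space. -/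
def IsPiBase (X : Type u) [TopologicalSpace X] (𝒱 : Set (Set X)) : Prop :=
  (∀ V ∈ 𝒱, IsOpen V ∧ V.Nonempty) ∧
    ∀ U : Set X, IsOpen U → U.Nonempty → ∃ V ∈ 𝒱, V ⊆ U

/-- The π-weight of a space: the least infinite cardinality of a π-base. -/
noncomputable def piWeight (X : Type u) [TopologicalSpace X] : Cardinal.{u} :=
  sInf {κ : Cardinal.{u} | ℵ₀ ≤ κ ∧ ∃ 𝒱 : Set (Set X), IsPiBase X 𝒱 ∧ #𝒱 ≤ κ}

/-- The cellularity of a space: the least infinite cardinal bounding the size of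
every pairwise disjoint family of nonempty open sets. -/
noncomputable def cellularity (X : Type u) [TopologicalSpace X] : Cardinal.{u} :=
  sInf {κ : Cardinal.{u} | ℵ₀ ≤ κ ∧ ∀ 𝒞 : Set (Set X),
    (∀ U ∈ 𝒞, IsOpen U ∧ U.Nonempty) → 𝒞.PairwiseDisjoint id → #𝒞 ≤ κ}

/-- The set of infinite cardinals κ witnessing the nonquasiregularity degree:
every nonempty open set U contains a nonempty set ⋂₀ 𝒱 with 𝒱 an open family of
size at most κ and ⋂_{V ∈ 𝒱} cl V ⊆ U. -/
def nqSet (X : Type u) [TopologicalSpace X] : Set Cardinal.{u} :=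
  {κ : Cardinal.{u} | ℵ₀ ≤ κ ∧ ∀ U : Set X, IsOpen U → U.Nonempty →
    ∃ 𝒱 : Set (Set X), (∀ V ∈ 𝒱, IsOpen V) ∧ #𝒱 ≤ κ ∧
      (⋂₀ 𝒱).Nonempty ∧ (⋂ V ∈ 𝒱, closure V) ⊆ U}

/-- A space is an nq-space if its nonquasiregularity degree is defined. -/
def IsNqSpace (X : Type u) [TopologicalSpace X] : Prop :=
  (nqSet X).Nonempty

/-- The nonquasiregularity degree of a space. -/
noncomputable def nq (X : Type u) [TopologicalSpace X] : Cardinal.{u} :=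
  sInf (nqSet X)

/-- The closed pseudocharacter at a point. -/
noncomputable def psiCPoint (X : Type u) [TopologicalSpace X] (x : X) : Cardinal.{u} :=
  sInf {κ : Cardinal.{u} | ℵ₀ ≤ κ ∧ ∃ 𝒱 : Set (Set X),
    (∀ V ∈ 𝒱, IsOpen V ∧ x ∈ V) ∧ #𝒱 ≤ κ ∧ (⋂ V ∈ 𝒱, closure V) = {x}}

/-- The closed pseudocharacter of a space. -/
noncomputable def psiC (X : Type u) [TopologicalSpace X] : Cardinal.{u} :=
  sInf {κ : Cardinal.{u} | ℵ₀ ≤ κ ∧ ∀ x : X, ∃ 𝒱 : Set (Set X),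
    (∀ V ∈ 𝒱, IsOpen V ∧ x ∈ V) ∧ #𝒱 ≤ κ ∧ (⋂ V ∈ 𝒱, closure V) = {x}}

/-- The dense closed pseudocharacter of a space. -/
noncomputable def dPsiC (X : Type u) [TopologicalSpace X] : Cardinal.{u} :=
  sInf {κ : Cardinal.{u} | ℵ₀ ≤ κ ∧ ∃ D : Set X, Dense D ∧ ∀ d ∈ D, psiCPoint X d ≤ κ}

/-- The weak closed pseudocharacter at a point: the least infinite cardinality of a
family 𝒱 of open sets with ⋂_{V ∈ 𝒱} cl V = {x}. -/
noncomputable def wPsiCPoint (X : Type u) [TopologicalSpace X] (x : X) : Cardinal.{u} :=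
  sInf {κ : Cardinal.{u} | ℵ₀ ≤ κ ∧ ∃ 𝒱 : Set (Set X),
    (∀ V ∈ 𝒱, IsOpen V) ∧ #𝒱 ≤ κ ∧ (⋂ V ∈ 𝒱, closure V) = {x}}

/-- The weak closed pseudocharacter of a space. -/
noncomputable def wPsiC (X : Type u) [TopologicalSpace X] : Cardinal.{u} :=
  ⨆ x : X, wPsiCPoint X x

/-- The pseudocharacter of a space: the least infinite cardinal κ such that every
point is the intersection of at most κ open sets. -/
noncomputable def psi (X : Type u) [TopologicalSpace X] : Cardinal.{u} :=
  sInf {κ : Cardinal.{u} | ℵ₀ ≤ κ ∧ ∀ x : X, ∃ 𝒱 : Set (Set X),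
    (∀ V ∈ 𝒱, IsOpen V) ∧ #𝒱 ≤ κ ∧ ⋂₀ 𝒱 = {x}}

/-- The Lindelöf degree of a space. -/
noncomputable def lindelofDegree (X : Type u) [TopologicalSpace X] : Cardinal.{u} :=
  sInf {κ : Cardinal.{u} | ℵ₀ ≤ κ ∧ ∀ 𝒰 : Set (Set X), (∀ U ∈ 𝒰, IsOpen U) →
    ⋃₀ 𝒰 = Set.univ → ∃ 𝒱 ⊆ 𝒰, #𝒱 ≤ κ ∧ ⋃₀ 𝒱 = Set.univ}

/-- The cardinality of the collection of regular open subsets of a space. -/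
noncomputable def cardRO (X : Type u) [TopologicalSpace X] : Cardinal.{u} :=
  #{R : Set X | R = interior (closure R)}

/-- A space is quasiregular if every nonempty open set contains a nonempty open
set whose closure is contained in it. -/
def Quasiregular (X : Type u) [TopologicalSpace X] : Prop :=
  ∀ U : Set X, IsOpen U → U.Nonempty →
    ∃ V : Set X, IsOpen V ∧ V.Nonempty ∧ closure V ⊆ U

/-!
Fix local π-bases `B x` of size at most `πχ(X)` and put `κ = c(X)·dψ_c(X)`. A closing-off
argument of length `κ⁺` yields a set `E` of size at most `πχ(X)^κ` such that, whenever at most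
`κ` families `𝒰ᵢ`, each consisting of at most `κ` members of `⋃_{a ∈ E} B a`, leave
`X \ ⋃ᵢ cl (⋃ 𝒰ᵢ)` nonempty, `E` has a point there.

If `E` were not dense, take `d ∉ cl E` in a dense set witnessing `dψ_c(X)`, with open sets
`V ∋ d`, at most `κ` of them, such that `⋂ cl V = {d}`. Every `a ∈ E` avoids some `cl V` and so
lies in the closure of the π-base elements at `a` disjoint from `cl V`; by cellularity, `κ` of
these elements (taken over all such `a`) already have a dense union. The resulting families
cover `E` by their closures but miss `d`, contradicting the choice of `E`.
-/

section Invariants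

variable {X : Type u} [TopologicalSpace X]

theorem piCharPoint_mem (x : X) : piCharPoint X x ∈
    {κ : Cardinal.{u} | ℵ₀ ≤ κ ∧ ∃ 𝒱 : Set (Set X), IsLocalPiBase X x 𝒱 ∧ #𝒱 ≤ κ} :=
  csInf_mem ⟨max ℵ₀ #(Set X), le_max_left _ _, {V | IsOpen V ∧ V.Nonempty},
    ⟨fun _ hV => hV, fun U hU hxU => ⟨U, ⟨hU, x, hxU⟩, subset_rfl⟩⟩,
    (mk_set_le _).trans (le_max_right _ _)⟩

theorem piCharPoint_le_piChar (x : X) : piCharPoint X x ≤ piChar X :=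
  le_ciSup bddAbove_of_small x

theorem aleph0_le_piChar [Nonempty X] : ℵ₀ ≤ piChar X :=
  (piCharPoint_mem (Classical.arbitrary X)).1.trans (piCharPoint_le_piChar _)

theorem exists_isLocalPiBase_mk_le_piChar (x : X) :
    ∃ 𝒱 : Set (Set X), IsLocalPiBase X x 𝒱 ∧ #𝒱 ≤ piChar X :=
  let ⟨𝒱, h𝒱, h𝒱card⟩ := (piCharPoint_mem x).2
  ⟨𝒱, h𝒱, h𝒱card.trans (piCharPoint_le_piChar x)⟩

theorem cellularity_mem : cellularity X ∈ {κ : Cardinal.{u} | ℵ₀ ≤ κ ∧ ∀ 𝒞 : Set (Set X),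
    (∀ U ∈ 𝒞, IsOpen U ∧ U.Nonempty) → 𝒞.PairwiseDisjoint id → #𝒞 ≤ κ} :=
  csInf_mem ⟨max ℵ₀ #(Set X), le_max_left _ _,
    fun _ _ _ => (mk_set_le _).trans (le_max_right _ _)⟩

theorem aleph0_le_cellularity : ℵ₀ ≤ cellularity X :=
  cellularity_mem.1

theorem mk_le_cellularity {𝒞 : Set (Set X)} (h𝒞 : ∀ U ∈ 𝒞, IsOpen U ∧ U.Nonempty)
    (hdisj : 𝒞.PairwiseDisjoint id) : #𝒞 ≤ cellularity X :=
  cellularity_mem.2 𝒞 h𝒞 hdisj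

theorem biInter_closure_isOpen_mem_eq [T2Space X] (x : X) :
    ⋂ V ∈ {V : Set X | IsOpen V ∧ x ∈ V}, closure V = {x} := by
  refine subset_antisymm (fun y hy => ?_) ?_
  · by_contra hyx
    obtain ⟨U, V, hU, hV, hxU, hyV, hUV⟩ := t2_separation (Ne.symm hyx)
    exact (hUV.closure_left hV).ne_of_mem (mem_iInter₂.1 hy U ⟨hU, hxU⟩) hyV rfl
  · simpa using fun V _ hxV => subset_closure hxV

theorem psiCPoint_mem [T2Space X] (x : X) : psiCPoint X x ∈
    {κ : Cardinal.{u} | ℵ₀ ≤ κ ∧ ∃ 𝒱 : Set (Set X),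
      (∀ V ∈ 𝒱, IsOpen V ∧ x ∈ V) ∧ #𝒱 ≤ κ ∧ (⋂ V ∈ 𝒱, closure V) = {x}} :=
  csInf_mem ⟨max ℵ₀ #(Set X), le_max_left _ _, {V | IsOpen V ∧ x ∈ V}, fun _ hV => hV,
    (mk_set_le _).trans (le_max_right _ _), biInter_closure_isOpen_mem_eq x⟩

theorem dPsiC_mem [T2Space X] : dPsiC X ∈
    {κ : Cardinal.{u} | ℵ₀ ≤ κ ∧ ∃ D : Set X, Dense D ∧ ∀ d ∈ D, psiCPoint X d ≤ κ} :=
  csInf_mem ⟨max ℵ₀ #(Set X), le_max_left _ _, univ, dense_univ, fun d _ =>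
    csInf_le' ⟨le_max_left _ _, {V | IsOpen V ∧ d ∈ V}, fun _ hV => hV,
      (mk_set_le _).trans (le_max_right _ _), biInter_closure_isOpen_mem_eq d⟩⟩

theorem exists_dense_forall_biInter_closure_eq [T2Space X] : ∃ D : Set X, Dense D ∧
    ∀ d ∈ D, ∃ 𝒱 : Set (Set X),
      (∀ V ∈ 𝒱, IsOpen V ∧ d ∈ V) ∧ #𝒱 ≤ dPsiC X ∧ (⋂ V ∈ 𝒱, closure V) = {d} := by
  obtain ⟨-, D, hD, hDψ⟩ := dPsiC_mem (X := X)
  refine ⟨D, hD, fun d hd => ?_⟩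
  obtain ⟨-, 𝒱, h𝒱, h𝒱card, h𝒱eq⟩ := psiCPoint_mem d
  exact ⟨𝒱, h𝒱, h𝒱card.trans (hDψ d hd), h𝒱eq⟩

theorem dens_le_mk {E : Set X} (hE : Dense E) : dens X ≤ #E :=
  csInf_le' ⟨E, hE, rfl⟩

end Invariants

section ClosingOff

variable {α : Type u}

theorem mk_bounded_subset_le_of_le {s : Set α} {κ μ : Cardinal.{u}} (hs : #s ≤ μ)
    (hμ : ℵ₀ ≤ μ) (hμκ : μ ^ κ ≤ μ) : #{t : Set α // t ⊆ s ∧ #t ≤ κ} ≤ μ :=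
  calc #{t : Set α // t ⊆ s ∧ #t ≤ κ} ≤ max #s ℵ₀ ^ κ := mk_bounded_subset_le s κ
    _ ≤ μ ^ κ := power_le_power_right (max_le hs hμ)
    _ ≤ μ := hμκ

theorem mk_iUnion_bounded_subset_le {op : Set α → Set α} {T : Set α} {κ μ : Cardinal.{u}}
    (hT : #T ≤ μ) (hμ : ℵ₀ ≤ μ) (hμκ : μ ^ κ ≤ μ) (hop : ∀ t : Set α, #t ≤ κ → #(op t) ≤ μ) :
    #(⋃ (t : Set α) (_ : t ⊆ T) (_ : #t ≤ κ), op t) ≤ μ := by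
  have hunion : (⋃ (t : Set α) (_ : t ⊆ T) (_ : #t ≤ κ), op t) =
      ⋃ p : {t : Set α // t ⊆ T ∧ #t ≤ κ}, op p.1 := by
    ext x
    simp only [mem_iUnion, exists_prop, Subtype.exists, and_assoc]
  rw [hunion]
  calc _ ≤ #{t : Set α // t ⊆ T ∧ #t ≤ κ} * ⨆ p : {t : Set α // t ⊆ T ∧ #t ≤ κ}, #(op p.1) :=
        mk_iUnion_le _
    _ ≤ μ * μ := mul_le_mul' (mk_bounded_subset_le_of_le hT hμ hμκ)
        (ciSup_le' fun p => hop p.1 p.2.2)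
    _ = μ := mul_eq_self hμ

variable (s : Set α) (κ : Cardinal.{u}) (op : Set α → Set α)

noncomputable def closingOffStage (o : Ordinal.{u}) : Set α :=
  s ∪ ⋃ (j : Ordinal.{u}) (_ : j < o) (t : Set α) (_ : t ⊆ closingOffStage j) (_ : #t ≤ κ), op t
termination_by o

theorem closingOffStage_eq (o : Ordinal.{u}) : closingOffStage s κ op o =
    s ∪ ⋃ (j : Ordinal.{u}) (_ : j < o) (t : Set α) (_ : t ⊆ closingOffStage s κ op j)
      (_ : #t ≤ κ), op t := by
  rw [closingOffStage]

variable {s κ op}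

theorem closingOffStage_mono {j o : Ordinal.{u}} (hjo : j ≤ o) :
    closingOffStage s κ op j ⊆ closingOffStage s κ op o := by
  rw [closingOffStage_eq s κ op j, closingOffStage_eq s κ op o]
  exact union_subset_union_right _ (biUnion_mono (fun i hi => lt_of_lt_of_le hi hjo)
    fun _ _ => subset_rfl)

theorem op_subset_closingOffStage {j o : Ordinal.{u}} (hjo : j < o) {t : Set α}
    (ht : t ⊆ closingOffStage s κ op j) (htκ : #t ≤ κ) : op t ⊆ closingOffStage s κ op o := by
  rw [closingOffStage_eq s κ op o]
  exact subset_union_of_subset_right (subset_iUnion₂_of_subset j hjo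
    (subset_iUnion₂_of_subset t ht (subset_iUnion (fun _ : #t ≤ κ => op t) htκ))) _

theorem exists_lt_mem_closingOffStage {o : Ordinal.{u}} (ho : Order.IsSuccLimit o) {x : α}
    (hx : x ∈ closingOffStage s κ op o) : ∃ j < o, x ∈ closingOffStage s κ op j := by
  rw [closingOffStage_eq] at hx
  obtain hxs | hxop := hx
  · refine ⟨0, ho.bot_lt, ?_⟩
    rw [closingOffStage_eq]
    exact Or.inl hxs
  · simp only [mem_iUnion] at hxop
    obtain ⟨j, hjo, t, ht, htκ, hxt⟩ := hxop
    exact ⟨Order.succ j, ho.succ_lt hjo, op_subset_closingOffStage (Order.lt_succ j) ht htκ hxt⟩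

theorem mk_closingOffStage_le {μ : Cardinal.{u}} (hμ : ℵ₀ ≤ μ) (hμκ : μ ^ κ ≤ μ)
    (hs : #s ≤ μ) (hop : ∀ t : Set α, #t ≤ κ → #(op t) ≤ μ) {o : Ordinal.{u}} (ho : o.card ≤ μ) :
    #(closingOffStage s κ op o) ≤ μ := by
  induction o using WellFoundedLT.induction with
  | _ o ih =>
  rw [closingOffStage_eq]
  refine (mk_union_le _ _).trans ((add_le_add hs ?_).trans (add_eq_self hμ).le)
  refine mk_biUnion_le_of_le ho hμ _ fun j hjo => ?_
  exact mk_iUnion_bounded_subset_le (ih j hjo ((Ordinal.card_le_card hjo.le).trans ho)) hμ hμκ hop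

theorem exists_superset_mk_le_forall_op_subset (s : Set α) (op : Set α → Set α)
    {κ μ : Cardinal.{u}} (hκ : ℵ₀ ≤ κ) (hκμ : κ < μ) (hμκ : μ ^ κ ≤ μ)
    (hs : #s ≤ μ) (hop : ∀ t : Set α, #t ≤ κ → #(op t) ≤ μ) :
    ∃ E, s ⊆ E ∧ #E ≤ μ ∧ ∀ t ⊆ E, #t ≤ κ → op t ⊆ E := by
  have ho : Order.IsSuccLimit (Order.succ κ).ord :=
    isSuccLimit_ord (hκ.trans (Order.le_succ κ))
  refine ⟨closingOffStage s κ op (Order.succ κ).ord, ?_, ?_, fun t ht htκ => ?_⟩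
  · rw [closingOffStage_eq]
    exact subset_union_left
  · refine mk_closingOffStage_le (hκ.trans hκμ.le) hμκ hs hop ?_
    rw [card_ord]
    exact Order.succ_le_of_lt hκμ
  · choose! j hj hxj using fun x (hx : x ∈ t) => exists_lt_mem_closingOffStage ho (ht hx)
    -- the successor of an infinite cardinal is regular, so `κ` stages never exhaust `κ⁺`
    have hcof : #t < (Order.succ κ).ord.cof := by
      rw [(isRegular_succ hκ).cof_ord]
      exact htκ.trans_lt (Order.lt_succ κ)
    have hsup : ⨆ x : t, j x < (Order.succ κ).ord :=
      Ordinal.iSup_lt_of_lt_cof hcof fun x => hj x x.2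
    exact op_subset_closingOffStage hsup (fun x hx => closingOffStage_mono
      (Ordinal.le_iSup (fun x : t => j x) ⟨x, hx⟩) (hxj x hx)) htκ

end ClosingOff

def boundedFamilies {α : Type u} (κ : Cardinal.{u}) (P : Set α) : Set (Set (Set α)) :=
  {𝒢 | 𝒢 ⊆ {𝒰 | 𝒰 ⊆ P ∧ #𝒰 ≤ κ} ∧ #𝒢 ≤ κ}

theorem mk_boundedFamilies_le {α : Type u} {P : Set α} {κ μ : Cardinal.{u}} (hP : #P ≤ μ)
    (hμ : ℵ₀ ≤ μ) (hμκ : μ ^ κ ≤ μ) : #(boundedFamilies κ P) ≤ μ :=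
  mk_bounded_subset_le_of_le (mk_bounded_subset_le_of_le hP hμ hμκ) hμ hμκ

theorem exists_subset_mk_le_mem_boundedFamilies {ι α : Type u} {E : Set ι} {B : ι → Set α}
    {κ : Cardinal.{u}} (hκ : ℵ₀ ≤ κ) {𝒢 : Set (Set α)}
    (h𝒢 : 𝒢 ∈ boundedFamilies κ (⋃ a ∈ E, B a)) :
    ∃ t ⊆ E, #t ≤ κ ∧ 𝒢 ∈ boundedFamilies κ (⋃ a ∈ t, B a) := by
  obtain ⟨h𝒢sub, h𝒢κ⟩ := h𝒢
  choose f hfE hbf using fun b : ⋃₀ 𝒢 =>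
    let ⟨_, h𝒰, hb⟩ := b.2
    mem_iUnion₂.1 ((h𝒢sub h𝒰).1 hb)
  refine ⟨range f, range_subset_iff.2 hfE, mk_range_le.trans ?_,
    fun 𝒰 h𝒰 => ⟨fun b hb => mem_biUnion (mem_range_self ⟨b, 𝒰, h𝒰, hb⟩)
      (hbf ⟨b, 𝒰, h𝒰, hb⟩), (h𝒢sub h𝒰).2⟩, h𝒢κ⟩
  calc #(⋃₀ 𝒢) ≤ #𝒢 * ⨆ 𝒰 : 𝒢, #𝒰 := mk_sUnion_le 𝒢
    _ ≤ κ * κ := mul_le_mul' h𝒢κ (ciSup_le' fun 𝒰 => (h𝒢sub 𝒰.2).2)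
    _ = κ := mul_eq_self hκ

theorem mk_biUnion_le_power {ι α : Type u} {t : Set ι} {B : ι → Set α} {κ π : Cardinal.{u}}
    (hκ : ℵ₀ ≤ κ) (hπ : ℵ₀ ≤ π) (ht : #t ≤ κ) (hB : ∀ a, #(B a) ≤ π) :
    #(⋃ a ∈ t, B a) ≤ π ^ κ :=
  calc #(⋃ a ∈ t, B a) ≤ #t * ⨆ a : t, #(B a) := mk_biUnion_le B t
    _ ≤ π ^ κ * π ^ κ := mul_le_mul' (ht.trans (cantor' κ (one_lt_aleph0.trans_le hπ)).le)
        (ciSup_le' fun a => (hB a).trans (self_le_power π (one_le_aleph0.trans hκ)))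
    _ = π ^ κ := mul_eq_self (hπ.trans (self_le_power π (one_le_aleph0.trans hκ)))

section Density

variable {X : Type u} [TopologicalSpace X]

theorem IsLocalPiBase.mem_closure_sUnion {x : X} {𝒱 : Set (Set X)} (h : IsLocalPiBase X x 𝒱)
    {U : Set X} (hU : IsOpen U) (hxU : x ∈ U) : x ∈ closure (⋃₀ {V ∈ 𝒱 | V ⊆ U}) := by
  refine mem_closure_iff.2 fun N hN hxN => ?_
  obtain ⟨V, hV, hVNU⟩ := h.2 (N ∩ U) (hN.inter hU) ⟨hxN, hxU⟩
  obtain ⟨z, hz⟩ := (h.1 V hV).2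
  exact ⟨z, (hVNU hz).1, V, ⟨hV, hVNU.trans inter_subset_right⟩, hz⟩

theorem exists_subset_mk_le_cellularity_subset_closure_sUnion {ℋ : Set (Set X)}
    (hℋ : ∀ H ∈ ℋ, IsOpen H) : ∃ 𝒰 ⊆ ℋ, #𝒰 ≤ cellularity X ∧ ⋃₀ ℋ ⊆ closure (⋃₀ 𝒰) := by
  let S : Set (Set (Set X)) :=
    {𝒞 | (∀ C ∈ 𝒞, IsOpen C ∧ C.Nonempty ∧ ∃ H ∈ ℋ, C ⊆ H) ∧ 𝒞.PairwiseDisjoint id}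
  obtain ⟨𝒞, ⟨h𝒞, hdisj⟩, hmax⟩ : ∃ 𝒞, Maximal (· ∈ S) 𝒞 := by
    refine zorn_subset S fun c hcS hc => ⟨⋃₀ c, ⟨?_, ?_⟩, fun _ => subset_sUnion_of_mem⟩
    · rintro C ⟨𝒞, h𝒞c, hC⟩
      exact (hcS h𝒞c).1 C hC
    · exact (pairwiseDisjoint_sUnion hc.directedOn).2 fun 𝒞 h𝒞 => (hcS h𝒞).2
  choose! f hfℋ hCf using fun C hC => (h𝒞 C hC).2.2
  refine ⟨f '' 𝒞, image_subset_iff.2 hfℋ, mk_image_le.trans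
    (mk_le_cellularity (fun C hC => ⟨(h𝒞 C hC).1, (h𝒞 C hC).2.1⟩) hdisj), ?_⟩
  rintro x ⟨H, hH, hxH⟩
  have h𝒞f : ⋃₀ 𝒞 ⊆ ⋃₀ (f '' 𝒞) := fun z ⟨C, hC, hz⟩ =>
    ⟨f C, mem_image_of_mem f hC, hCf C hC hz⟩
  refine closure_mono h𝒞f (mem_closure_iff.2 fun N hN hxN => ?_)
  by_contra hNC
  have hins : insert (N ∩ H) 𝒞 ∈ S := by
    refine ⟨?_, hdisj.insert fun C hC _ => disjoint_left.2 fun z hz hzC =>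
      hNC ⟨z, hz.1, C, hC, hzC⟩⟩
    rintro C (rfl | hC)
    exacts [⟨hN.inter (hℋ H hH), ⟨x, hxN, hxH⟩, H, hH, inter_subset_right⟩, h𝒞 C hC]
  exact hNC ⟨x, hxN, N ∩ H, hmax hins (subset_insert _ _) (mem_insert _ _), hxN, hxH⟩

theorem dense_of_forall_mem_boundedFamilies {κ : Cardinal.{u}} (hc : cellularity X ≤ κ)
    {D : Set X} (hD : Dense D)
    (hψ : ∀ d ∈ D, ∃ 𝒱 : Set (Set X),
      (∀ V ∈ 𝒱, IsOpen V ∧ d ∈ V) ∧ #𝒱 ≤ κ ∧ (⋂ V ∈ 𝒱, closure V) ⊆ {d})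
    {B : X → Set (Set X)} (hB : ∀ x, IsLocalPiBase X x (B x)) {E : Set X}
    (hE : ∀ 𝒢 ∈ boundedFamilies κ (⋃ a ∈ E, B a),
      E ⊆ ⋃ 𝒰 ∈ 𝒢, closure (⋃₀ 𝒰) → ⋃ 𝒰 ∈ 𝒢, closure (⋃₀ 𝒰) = Set.univ) :
    Dense E := by
  by_contra hEd
  obtain ⟨d, hdD, hdE⟩ : ∃ d ∈ D, d ∉ closure E := hD.exists_mem_open
    isClosed_closure.isOpen_compl (nonempty_compl.2 fun h => hEd (dense_iff_closure_eq.2 h))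
  obtain ⟨𝒱, h𝒱, h𝒱κ, h𝒱d⟩ := hψ d hdD
  choose 𝒰 h𝒰sub h𝒰κ h𝒰dense using fun V : Set X =>
    exists_subset_mk_le_cellularity_subset_closure_sUnion
      (ℋ := {b ∈ ⋃ a ∈ E, B a | b ⊆ (closure V)ᶜ}) fun b ⟨hb, _⟩ =>
        let ⟨a, _, hba⟩ := mem_iUnion₂.1 hb
        ((hB a).1 b hba).1
  have hcover : E ⊆ ⋃ 𝒲 ∈ 𝒰 '' 𝒱, closure (⋃₀ 𝒲) := by
    intro a ha
    obtain ⟨V, hV, haV⟩ : ∃ V ∈ 𝒱, a ∉ closure V := by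
      by_contra! h
      exact hdE (h𝒱d (mem_iInter₂.2 h) ▸ subset_closure ha)
    rw [biUnion_image]
    refine mem_iUnion₂.2 ⟨V, hV, closure_minimal ?_ isClosed_closure
      ((hB a).mem_closure_sUnion isClosed_closure.isOpen_compl haV)⟩
    refine (sUnion_mono ?_).trans (h𝒰dense V)
    exact fun b hb => ⟨mem_biUnion ha hb.1, hb.2⟩
  have hd : d ∉ ⋃ 𝒲 ∈ 𝒰 '' 𝒱, closure (⋃₀ 𝒲) := by
    simp only [biUnion_image, mem_iUnion, not_exists]
    intro V hV hdV
    obtain ⟨z, hzV, b, hb, hzb⟩ := mem_closure_iff.1 hdV V (h𝒱 V hV).1 (h𝒱 V hV).2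
    exact (h𝒰sub V hb).2 hzb (subset_closure hzV)
  have h𝒢 : 𝒰 '' 𝒱 ∈ boundedFamilies κ (⋃ a ∈ E, B a) :=
    ⟨image_subset_iff.2 fun V _ => ⟨(h𝒰sub V).trans fun _ hb => hb.1, (h𝒰κ V).trans hc⟩,
      mk_image_le.trans h𝒱κ⟩
  exact hd (hE _ h𝒢 hcover ▸ mem_univ d)

end Density

/-- If `X` is Hausdorff then `d(X) ≤ πχ(X)^(c(X)·dψ_c(X))`. -/
theorem stmt_6 (X : Type u) [TopologicalSpace X] [T2Space X] :
    dens X ≤ piChar X ^ (cellularity X * dPsiC X) := by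
  rcases isEmpty_or_nonempty X with hX | hX
  · exact (dens_le_mk (E := ∅) (by simp [Dense])).trans (by simp)
  set κ := cellularity X * dPsiC X
  have hcκ : cellularity X ≤ κ := le_mul_right (aleph0_pos.trans_le dPsiC_mem.1).ne'
  have hψκ : dPsiC X ≤ κ := le_mul_left (aleph0_pos.trans_le aleph0_le_cellularity).ne'
  have hκ : ℵ₀ ≤ κ := aleph0_le_cellularity.trans hcκ
  have hπ : ℵ₀ ≤ piChar X := aleph0_le_piChar
  have hμ : ℵ₀ ≤ piChar X ^ κ := hπ.trans (self_le_power _ (one_le_aleph0.trans hκ))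
  have hμκ : (piChar X ^ κ) ^ κ ≤ piChar X ^ κ := by rw [← power_mul, mul_eq_self hκ]
  obtain ⟨D, hD, hψ⟩ := exists_dense_forall_biInter_closure_eq (X := X)
  choose B hB hBπ using exists_isLocalPiBase_mk_le_piChar (X := X)
  let w (𝒢 : Set (Set (Set X))) : X := Classical.epsilon (· ∉ ⋃ 𝒰 ∈ 𝒢, closure (⋃₀ 𝒰))
  obtain ⟨E, -, hEμ, hEclosed⟩ := exists_superset_mk_le_forall_op_subset ∅
    (fun t => w '' boundedFamilies κ (⋃ a ∈ t, B a)) hκ (cantor' κ (one_lt_aleph0.trans_le hπ))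
    hμκ (by simp) fun t ht =>
      mk_image_le.trans (mk_boundedFamilies_le (mk_biUnion_le_power hκ hπ ht hBπ) hμ hμκ)
  refine (dens_le_mk (dense_of_forall_mem_boundedFamilies hcκ hD (fun d hd => ?_) hB
    fun 𝒢 h𝒢 hE => ?_)).trans hEμ
  · obtain ⟨𝒱, h𝒱, h𝒱card, h𝒱eq⟩ := hψ d hd
    exact ⟨𝒱, h𝒱, h𝒱card.trans hψκ, h𝒱eq.subset⟩
  · obtain ⟨t, htE, htκ, h𝒢t⟩ := exists_subset_mk_le_mem_boundedFamilies hκ h𝒢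
    by_contra hne
    exact Classical.epsilon_spec ((ne_univ_iff_exists_notMem _).1 hne)
      (hE (hEclosed t htE htκ (mem_image_of_mem w h𝒢t)))
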